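/- There exists a constant C > 0 such that for every even natural number N ≥ 2 and every natural number k ≥ N, the degeneracy-averaged variance of the collective Lamb shifts satisfies Var(Λ(k)) = (1/2^N) · ∑_{j=0}^{N/2} d_j · Tr( L(2j, k − N/2 + j)² ) ≤ C · N · k, where d_j = N!(2j+1)/((N/2−j)!(N/2+j+1)!) and L(J,K') is the Lamb-shift coupling matrix (with Tr(L(0,·)²) = 0 for the 1×1 block j = 0). In other words, the root-mean-square collective Lamb shift, averaged over the degeneracies of all angular momentum subspaces, is O(√(Nk)) for k ≥ N. -/

import Mathlib

/-- The Lamb-shift coupling matrix `L(J, K')`: the `(min J K' + 1) × (min J K' + 1)`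
real symmetric tridiagonal matrix with zero diagonal and off-diagonal entries
`L_{α,α+1} = L_{α+1,α} = √(α (J+1-α) (K'+1-α))` for `α = 1, …, min J K'` (1-based);
in 0-based indexing the `(i, i+1)` entry is `√((i+1) (J-i) (K'-i))`.  For `J = 0`
this is the `1 × 1` zero matrix. -/
noncomputable def lambMatrix (J K' : ℕ) :
    Matrix (Fin (min J K' + 1)) (Fin (min J K' + 1)) ℝ :=
  Matrix.of fun i j =>
    if (j : ℕ) = (i : ℕ) + 1 then
      Real.sqrt (((i : ℕ) + 1) * ((J : ℝ) - (i : ℕ)) * ((K' : ℝ) - (i : ℕ)))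
    else if (i : ℕ) = (j : ℕ) + 1 then
      Real.sqrt (((j : ℕ) + 1) * ((J : ℝ) - (j : ℕ)) * ((K' : ℝ) - (j : ℕ)))
    else 0

/-- The degeneracy `d_j = N!(2j+1)/((N/2-j)!(N/2+j+1)!)` of the collective
angular-momentum-`j` subspace of `N` spin-1/2 particles (as a real number). -/
noncomputable def degeneracy (N j : ℕ) : ℝ :=
  (Nat.factorial N : ℝ) * (2 * (j : ℝ) + 1) /
    ((Nat.factorial (N / 2 - j) : ℝ) * (Nat.factorial (N / 2 + j + 1) : ℝ))

/-!
`L(J, K')` is tridiagonal with squared entries `α (J+1-α) (K'+1-α) ≤ J² K'`, so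
`Tr L(2j, K')² ≤ 24 j³ K'`, and `K' = k - N/2 + j ≤ 2k`. For `N = 2m` the degeneracies
telescope, `d_j = C(2m, m+j) - C(2m, m+j+1)`, so Abel summation turns `∑ d_j j³` into
`∑ C(2m, m+j) (j³ - (j-1)³) ≤ 3 ∑ C(2m, m+j) j²`, and the binomial variance identity
`∑ C(n, i) (2i - n)² = n 2ⁿ` bounds this by `3/2 · m 4ᵐ`. Altogether the variance is at most
`36 N k`.
-/

open Finset Matrix

theorem trace_mul_self_le_of_tridiagonal {n : ℕ} {A : Matrix (Fin n) (Fin n) ℝ} {B : ℝ}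
    (hA : ∀ i j : Fin n, (j : ℕ) ≠ i + 1 → (i : ℕ) ≠ j + 1 → A i j = 0)
    (hB : ∀ i j, A i j * A j i ≤ B) :
    trace (A * A) ≤ 2 * n * B := by
  have hrow : ∀ i, (A * A) i i ≤ 2 * B := by
    intro i
    have hB0 : 0 ≤ B := (mul_self_nonneg _).trans (hB i i)
    set S := univ.filter (fun j : Fin n => (j : ℕ) = i + 1) ∪
      univ.filter (fun j : Fin n => (i : ℕ) = j + 1)
    have hS : #S ≤ 2 :=
      (card_union_le _ _).trans <| add_le_add
        (card_le_one.2 fun a ha b hb => by simp only [mem_filter] at ha hb; omega)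
        (card_le_one.2 fun a ha b hb => by simp only [mem_filter] at ha hb; omega)
    rw [mul_apply, ← sum_subset (subset_univ S) fun j _ hj => by
      simp only [S, mem_union, mem_filter, mem_univ, true_and, not_or] at hj
      rw [hA i j hj.1 hj.2, zero_mul]]
    calc ∑ j ∈ S, A i j * A j i ≤ #S • B := sum_le_card_nsmul _ _ _ fun j _ => hB i j
      _ ≤ 2 * B := by rw [nsmul_eq_mul]; gcongr; exact_mod_cast hS
  calc trace (A * A) = ∑ i, (A * A) i i := rfl
    _ ≤ ∑ _i : Fin n, 2 * B := sum_le_sum fun i _ => hrow i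
    _ = 2 * n * B := by
      rw [sum_const, card_univ, Fintype.card_fin, nsmul_eq_mul]; ring

theorem sum_range_sub_mul_eq {R : Type*} [CommRing R] (b f : ℕ → R) (hf : f 0 = 0) (n : ℕ) :
    ∑ j ∈ range n, (b j - b (j + 1)) * f j =
      ∑ j ∈ range n, b j * (f j - f (j - 1)) - b n * f (n - 1) := by
  induction n with
  | zero => simp [hf]
  | succ n ih =>
    rw [sum_range_succ, ih, sum_range_succ, Nat.add_sub_cancel]
    ring

theorem sum_range_choose_mul_two_mul_sub_sq (n : ℕ) :
    ∑ i ∈ range (n + 1), (n.choose i : ℝ) * (2 * i - n) ^ 2 = (n : ℝ) * 2 ^ n := by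
  induction n with
  | zero => simp
  | succ n ih =>
    have hsplit := sum_choose_succ_mul (fun i j => ((i : ℝ) - j) ^ 2) n
    have hlhs :
        ∑ i ∈ range (n + 1 + 1), ((n + 1).choose i : ℝ) * (2 * i - (n + 1 : ℕ)) ^ 2 =
        ∑ i ∈ range (n + 2), ((n + 1).choose i : ℝ) * ((i : ℝ) - (n + 1 - i : ℕ)) ^ 2 :=
      sum_congr rfl fun i hi => by
        rw [Nat.cast_sub (mem_range_succ_iff.1 hi)]; push_cast; ring
    have hrhs : ∀ i ∈ range (n + 1),
        (n.choose i : ℝ) * ((i : ℝ) - (n + 1 - i : ℕ)) ^ 2 +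
          (n.choose i : ℝ) * (((i + 1 : ℕ) : ℝ) - (n - i : ℕ)) ^ 2 =
        2 * ((n.choose i : ℝ) * (2 * i - n) ^ 2) + 2 * n.choose i := fun i hi => by
      have hin := mem_range_succ_iff.1 hi
      rw [Nat.cast_sub (by omega), Nat.cast_sub hin]
      push_cast; ring
    have hsum : ∑ i ∈ range (n + 1), (n.choose i : ℝ) = 2 ^ n := by
      exact_mod_cast Nat.sum_range_choose n
    rw [hlhs, hsplit, ← sum_add_distrib, sum_congr rfl hrhs, sum_add_distrib, ← mul_sum,
      ← mul_sum, ih, hsum]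
    push_cast; ring

theorem lambMatrix_apply_eq_zero {J K' : ℕ} {i j : Fin (min J K' + 1)}
    (h₁ : (j : ℕ) ≠ i + 1) (h₂ : (i : ℕ) ≠ j + 1) : lambMatrix J K' i j = 0 := by
  simp [lambMatrix, h₁, h₂]

theorem lambMatrix_apply_comm (J K' : ℕ) (i j : Fin (min J K' + 1)) :
    lambMatrix J K' i j = lambMatrix J K' j i := by
  simp only [lambMatrix, of_apply]
  split_ifs <;> first | rfl | omega

theorem lambMatrix_apply_sq_le (J K' : ℕ) (i j : Fin (min J K' + 1)) :
    lambMatrix J K' i j ^ 2 ≤ (J : ℝ) ^ 2 * K' := by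
  have key : ∀ a : ℕ, a + 1 ≤ min J K' →
      √((a + 1) * ((J : ℝ) - a) * ((K' : ℝ) - a)) ^ 2 ≤ (J : ℝ) ^ 2 * K' := by
    intro a ha
    have hJ : (a : ℝ) + 1 ≤ J := by exact_mod_cast ha.trans (min_le_left _ _)
    have hK : (a : ℝ) + 1 ≤ K' := by exact_mod_cast ha.trans (min_le_right _ _)
    rw [Real.sq_sqrt (by apply mul_nonneg (mul_nonneg _ _) _ <;> linarith), sq]
    gcongr <;> linarith
  simp only [lambMatrix, of_apply]
  split_ifs
  · exact key i (by omega)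
  · exact key j (by omega)
  · rw [zero_pow two_ne_zero]; positivity

theorem trace_lambMatrix_mul_self_le (J K' : ℕ) :
    trace (lambMatrix J K' * lambMatrix J K') ≤ 2 * ((J : ℝ) + 1) * J ^ 2 * K' := by
  calc trace (lambMatrix J K' * lambMatrix J K')
      ≤ 2 * ((min J K' + 1 : ℕ) : ℝ) * (J ^ 2 * K') :=
        trace_mul_self_le_of_tridiagonal (fun _ _ => lambMatrix_apply_eq_zero) fun i j => by
          rw [lambMatrix_apply_comm J K' j i, ← sq]; exact lambMatrix_apply_sq_le J K' i j
    _ ≤ 2 * (J + 1) * J ^ 2 * K' := by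
        rw [mul_assoc _ ((J : ℝ) ^ 2)]
        gcongr
        exact_mod_cast Nat.succ_le_succ (min_le_left J K')

theorem trace_lambMatrix_two_mul_mul_self_le (j K' : ℕ) :
    trace (lambMatrix (2 * j) K' * lambMatrix (2 * j) K') ≤ 24 * j ^ 3 * K' := by
  refine (trace_lambMatrix_mul_self_le _ _).trans ?_
  rcases Nat.eq_zero_or_pos j with rfl | hj
  · simp
  · have hj' : (1 : ℝ) ≤ j := by exact_mod_cast hj
    push_cast
    nlinarith [mul_nonneg (mul_nonneg (sq_nonneg (j : ℝ)) K'.cast_nonneg) (sub_nonneg.2 hj')]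

theorem sum_range_choose_add_mul_sq_le (m : ℕ) :
    ∑ j ∈ range (m + 1), ((2 * m).choose (m + j) : ℝ) * j ^ 2 ≤ m * 4 ^ m / 2 := by
  have hvar := sum_range_choose_mul_two_mul_sub_sq (2 * m)
  calc ∑ j ∈ range (m + 1), ((2 * m).choose (m + j) : ℝ) * j ^ 2
      = ∑ i ∈ Ico m (2 * m + 1), ((2 * m).choose i : ℝ) * (2 * i - (2 * m : ℕ)) ^ 2 / 4 := by
        rw [sum_Ico_eq_sum_range, show 2 * m + 1 - m = m + 1 by omega]
        refine sum_congr rfl fun j _ => ?_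
        push_cast; ring
    _ ≤ ∑ i ∈ range (2 * m + 1), ((2 * m).choose i : ℝ) * (2 * i - (2 * m : ℕ)) ^ 2 / 4 :=
        sum_le_sum_of_subset_of_nonneg
          (by rw [range_eq_Ico]; exact Ico_subset_Ico_left (Nat.zero_le m))
          fun _ _ _ => by positivity
    _ = m * 4 ^ m / 2 := by
        rw [← sum_div, hvar, pow_mul]; push_cast; ring

theorem degeneracy_nonneg (N j : ℕ) : 0 ≤ degeneracy N j := by
  unfold degeneracy; positivity

theorem degeneracy_two_mul (m j : ℕ) (hj : j ≤ m) :
    degeneracy (2 * m) j = ((2 * m).choose (m + j) : ℝ) - (2 * m).choose (m + j + 1) := by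
  have hfact := Nat.choose_mul_factorial_mul_factorial (by omega : m + j ≤ 2 * m)
  have hsucc := Nat.choose_succ_right_eq (2 * m) (m + j)
  rw [show 2 * m - (m + j) = m - j by omega] at hfact hsucc
  have hfact' : ((2 * m).factorial : ℝ) =
      (2 * m).choose (m + j) * (m + j).factorial * (m - j).factorial := by
    exact_mod_cast hfact.symm
  have hsucc' : ((2 * m).choose (m + j + 1) : ℝ) * (m + j + 1) =
      (2 * m).choose (m + j) * (m - j) := by
    exact_mod_cast hsucc
  rw [degeneracy, show 2 * m / 2 = m by omega, hfact', Nat.factorial_succ]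
  push_cast [Nat.cast_sub hj] at hsucc' ⊢
  field_simp
  linear_combination hsucc'

theorem sum_degeneracy_mul_cube_le (m : ℕ) :
    ∑ j ∈ range (m + 1), degeneracy (2 * m) j * j ^ 3 ≤ 3 / 2 * m * 4 ^ m := by
  set b : ℕ → ℝ := fun j => ((2 * m).choose (m + j) : ℝ)
  have hb : b (m + 1) = 0 := by
    simp [b, Nat.choose_eq_zero_of_lt (by omega : 2 * m < m + (m + 1))]
  have hdeg : ∀ j ∈ range (m + 1),
      degeneracy (2 * m) j * j ^ 3 = (b j - b (j + 1)) * (j : ℝ) ^ 3 :=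
    fun j hj => by rw [degeneracy_two_mul m j (mem_range_succ_iff.1 hj)]; rfl
  have hcube : ∀ j : ℕ, (j : ℝ) ^ 3 - ((j - 1 : ℕ) : ℝ) ^ 3 ≤ 3 * j ^ 2 := by
    rintro (_ | j)
    · simp
    · push_cast [Nat.add_sub_cancel]; nlinarith [(j.cast_nonneg : (0 : ℝ) ≤ j)]
  calc ∑ j ∈ range (m + 1), degeneracy (2 * m) j * j ^ 3
      = ∑ j ∈ range (m + 1), b j * ((j : ℝ) ^ 3 - ((j - 1 : ℕ) : ℝ) ^ 3) := by
        rw [sum_congr rfl hdeg, sum_range_sub_mul_eq b (fun j => (j : ℝ) ^ 3) (by simp), hb,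
          zero_mul, sub_zero]
    _ ≤ ∑ j ∈ range (m + 1), b j * (3 * j ^ 2) :=
        sum_le_sum fun j _ => mul_le_mul_of_nonneg_left (hcube j) (Nat.cast_nonneg _)
    _ = 3 * ∑ j ∈ range (m + 1), b j * j ^ 2 := by
        rw [mul_sum]; exact sum_congr rfl fun _ _ => by ring
    _ ≤ 3 * (m * 4 ^ m / 2) := by gcongr; exact sum_range_choose_add_mul_sq_le m
    _ = 3 / 2 * m * 4 ^ m := by ring

/-- there is a constant `C > 0` such that for every even `N ≥ 2` and every
`k ≥ N`, the degeneracy-averaged variance of the collective Lamb shifts satisfies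
`Var(Λ(k)) = 2⁻ᴺ ∑_{j=0}^{N/2} d_j · Tr(L(2j, k - N/2 + j)²) ≤ C·N·k`; i.e. the RMS
collective Lamb shift averaged over all angular momentum subspaces is `O(√(Nk))`. -/
theorem degeneracy_averaged_variance_bound :
    ∃ C : ℝ, 0 < C ∧ ∀ N k : ℕ, 2 ≤ N → Even N → N ≤ k →
      (1 / 2 ^ N) *
          ∑ j ∈ Finset.range (N / 2 + 1),
            degeneracy N j *
              Matrix.trace
                (lambMatrix (2 * j) (k - N / 2 + j) * lambMatrix (2 * j) (k - N / 2 + j)) ≤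
        C * (N : ℝ) * (k : ℝ) := by
  refine ⟨36, by norm_num, ?_⟩
  rintro N k - ⟨m, rfl⟩ hk
  rw [← two_mul] at hk ⊢
  rw [Nat.mul_div_cancel_left m two_pos]
  have hterm : ∀ j ∈ range (m + 1),
      degeneracy (2 * m) j *
          trace (lambMatrix (2 * j) (k - m + j) * lambMatrix (2 * j) (k - m + j)) ≤
        48 * k * (degeneracy (2 * m) j * j ^ 3) := fun j hj => by
    have hK : ((k - m + j : ℕ) : ℝ) ≤ 2 * k := by
      exact_mod_cast (by have := mem_range_succ_iff.1 hj; omega : k - m + j ≤ 2 * k)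
    calc _ ≤ degeneracy (2 * m) j * (24 * j ^ 3 * (2 * k)) :=
          mul_le_mul_of_nonneg_left ((trace_lambMatrix_two_mul_mul_self_le j _).trans (by gcongr))
            (degeneracy_nonneg _ _)
      _ = _ := by ring
  calc _ ≤ 1 / 4 ^ m * ∑ j ∈ range (m + 1), 48 * k * (degeneracy (2 * m) j * j ^ 3) := by
        rw [pow_mul, show (2 : ℝ) ^ 2 = 4 by norm_num]
        exact mul_le_mul_of_nonneg_left (sum_le_sum hterm) (by positivity)
    _ = 48 * k / 4 ^ m * ∑ j ∈ range (m + 1), degeneracy (2 * m) j * j ^ 3 := by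
        rw [← mul_sum]; ring
    _ ≤ 48 * k / 4 ^ m * (3 / 2 * m * 4 ^ m) := by gcongr; exact sum_degeneracy_mul_cube_le m
    _ = 36 * ((2 * m : ℕ) : ℝ) * k := by field_simp; push_cast; ring
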